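/- Define Φ⁺(θ,φ) = (1/(2√π))·(i cos θ, i e^{iφ} sin θ, 0, 0) ∈ ℂ⁴ and Φ⁻ = (1/(2√π))·(0, 0, 1, 0) ∈ ℂ⁴, and let u⁺, u⁻ : (0,∞) → ℂ. Set u(r,θ,φ) = u⁺(r)Φ⁺(θ,φ) + u⁻(r)Φ⁻. Then for all r > 0 and θ, φ ∈ ℝ: ⟨u(r,θ,φ), u(r,θ,φ)⟩ · u(r,θ,φ) = v⁺(r)Φ⁺(θ,φ) + v⁻(r)Φ⁻ with v^±(r) = (1/(4π))(|u⁺(r)|² + |u⁻(r)|²) u^±(r), and ⟨βu(r,θ,φ), u(r,θ,φ)⟩ · u(r,θ,φ) = w⁺(r)Φ⁺(θ,φ) + w⁻(r)Φ⁻ with w^±(r) = (1/(4π))(|u⁺(r)|² − |u⁻(r)|²) u^±(r). In particular, functions of the form u⁺(r)Φ⁺ + u⁻(r)Φ⁻ are mapped to functions of the same form by the nonlinearities F(u) = ⟨u,u⟩u and F(u) = ⟨βu,u⟩u. -/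

import Mathlib

/-!
`Φ⁺` lives in the upper and `Φ⁻` in the lower two components, so they are orthogonal and are
eigenvectors of `β` with eigenvalues `1` and `-1`; since `|e^{iφ}| = 1` and `cos² θ + sin² θ = 1`,
both have `⟨Φ^±, Φ^±⟩ = 1/(4π)`. By sesquilinearity `⟨u, u⟩` and `⟨βu, u⟩` are then the functions
`(|u⁺|² ± |u⁻|²)/(4π)` of `r` alone, and multiplying `u` by them keeps its form.
-/

open Complex

/-- The standard Hermitian inner product on `ℂ⁴` (conjugate-linear in the first slot). -/
noncomputable def c4inner (v w : Fin 4 → ℂ) : ℂ := ∑ i, (starRingEnd ℂ) (v i) * w i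

/-- The Dirac matrix `β = diag(1,1,−1,−1)` acting on `ℂ⁴`. -/
def betaC4 (v : Fin 4 → ℂ) : Fin 4 → ℂ := ![v 0, v 1, -v 2, -v 3]

/-- The spinor `Φ⁺_{1/2,1}(θ,φ) = (1/(2√π))·(i cos θ, i e^{iφ} sin θ, 0, 0)`. -/
noncomputable def PhiPlus (θ φ : ℝ) : Fin 4 → ℂ :=
  (1 / (2 * Real.sqrt Real.pi) : ℂ) •
    ![Complex.I * (Real.cos θ : ℂ),
      Complex.I * Complex.exp (Complex.I * (φ : ℂ)) * (Real.sin θ : ℂ), 0, 0]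

/-- The spinor `Φ⁻_{1/2,1} = (1/(2√π))·(0, 0, 1, 0)`. -/
noncomputable def PhiMinus : Fin 4 → ℂ :=
  (1 / (2 * Real.sqrt Real.pi) : ℂ) • ![0, 0, 1, 0]

open scoped InnerProductSpace ComplexConjugate

theorem inner_smul_add_smul_of_inner_eq_zero {𝕜 E : Type*} [RCLike 𝕜] [SeminormedAddCommGroup E]
    [InnerProductSpace 𝕜 E] {x y : E} (h : ⟪x, y⟫_𝕜 = 0) (a b c d : 𝕜) :
    ⟪a • x + b • y, c • x + d • y⟫_𝕜 = conj a * c * ⟪x, x⟫_𝕜 + conj b * d * ⟪y, y⟫_𝕜 := by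
  have h' : ⟪y, x⟫_𝕜 = 0 := inner_eq_zero_symm.mp h
  simp only [inner_add_left, inner_add_right, inner_smul_left, inner_smul_right, h, h']
  ring

theorem c4inner_eq_inner (v w : Fin 4 → ℂ) :
    c4inner v w = ⟪WithLp.toLp 2 v, WithLp.toLp 2 w⟫_ℂ := by
  simp [c4inner, PiLp.inner_apply, mul_comm]

theorem c4inner_smul_add_smul_of_c4inner_eq_zero {v w : Fin 4 → ℂ} (h : c4inner v w = 0)
    (a b c d : ℂ) :
    c4inner (a • v + b • w) (c • v + d • w)
      = conj a * c * c4inner v v + conj b * d * c4inner w w := by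
  rw [c4inner_eq_inner] at h
  simp only [c4inner_eq_inner, WithLp.toLp_add, WithLp.toLp_smul]
  exact inner_smul_add_smul_of_inner_eq_zero h a b c d

theorem c4inner_self (v : Fin 4 → ℂ) : c4inner v v = ((∑ i, ‖v i‖ ^ 2 : ℝ) : ℂ) := by
  push_cast
  simp [c4inner, Complex.conj_mul']

theorem c4inner_PhiPlus_PhiMinus (θ φ : ℝ) : c4inner (PhiPlus θ φ) PhiMinus = 0 := by
  simp [c4inner, Fin.sum_univ_four, PhiPlus, PhiMinus]

theorem norm_one_div_two_mul_sqrt_pi_sq :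
    ‖(1 / (2 * Real.sqrt Real.pi) : ℂ)‖ ^ 2 = 1 / (4 * Real.pi) := by
  rw [norm_div, norm_one, norm_mul, Complex.norm_two, Complex.norm_real, Real.norm_eq_abs,
    div_pow, mul_pow, sq_abs, Real.sq_sqrt Real.pi_pos.le]
  norm_num

theorem c4inner_PhiPlus_self (θ φ : ℝ) :
    c4inner (PhiPlus θ φ) (PhiPlus θ φ) = ((1 / (4 * Real.pi) : ℝ) : ℂ) := by
  rw [c4inner_self]
  congr 1
  simp only [PhiPlus, Pi.smul_apply, smul_eq_mul, Fin.sum_univ_four, Matrix.cons_val, norm_mul,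
    norm_zero, Complex.norm_I, Complex.norm_exp_I_mul_ofReal, Complex.norm_real, Real.norm_eq_abs,
    mul_pow, sq_abs, norm_one_div_two_mul_sqrt_pi_sq]
  linear_combination (1 / (4 * Real.pi)) * Real.cos_sq_add_sin_sq θ

theorem c4inner_PhiMinus_self : c4inner PhiMinus PhiMinus = ((1 / (4 * Real.pi) : ℝ) : ℂ) := by
  rw [c4inner_self]
  congr 1
  simp only [PhiMinus, Pi.smul_apply, smul_eq_mul, Fin.sum_univ_four, Matrix.cons_val, norm_mul,
    norm_zero, norm_one, mul_pow, norm_one_div_two_mul_sqrt_pi_sq]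
  ring

theorem betaC4_smul_PhiPlus_add_smul_PhiMinus (a b : ℂ) (θ φ : ℝ) :
    betaC4 (a • PhiPlus θ φ + b • PhiMinus) = a • PhiPlus θ φ + (-b) • PhiMinus := by
  ext i
  fin_cases i <;> simp [betaC4, PhiPlus, PhiMinus]

theorem c4inner_smul_PhiPlus_add_smul_PhiMinus_self (a b : ℂ) (θ φ : ℝ) :
    c4inner (a • PhiPlus θ φ + b • PhiMinus) (a • PhiPlus θ φ + b • PhiMinus)
      = (((1 / (4 * Real.pi)) * (‖a‖ ^ 2 + ‖b‖ ^ 2) : ℝ) : ℂ) := by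
  rw [c4inner_smul_add_smul_of_c4inner_eq_zero (c4inner_PhiPlus_PhiMinus θ φ),
    c4inner_PhiPlus_self, c4inner_PhiMinus_self, Complex.conj_mul', Complex.conj_mul']
  push_cast
  ring

theorem c4inner_betaC4_smul_PhiPlus_add_smul_PhiMinus (a b : ℂ) (θ φ : ℝ) :
    c4inner (betaC4 (a • PhiPlus θ φ + b • PhiMinus)) (a • PhiPlus θ φ + b • PhiMinus)
      = (((1 / (4 * Real.pi)) * (‖a‖ ^ 2 - ‖b‖ ^ 2) : ℝ) : ℂ) := by
  rw [betaC4_smul_PhiPlus_add_smul_PhiMinus,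
    c4inner_smul_add_smul_of_c4inner_eq_zero (c4inner_PhiPlus_PhiMinus θ φ),
    c4inner_PhiPlus_self, c4inner_PhiMinus_self, map_neg, neg_mul, Complex.conj_mul',
    Complex.conj_mul']
  push_cast
  ring

/-- For radial profiles `u⁺, u⁻ : (0,∞) → ℂ` and
`u(r,θ,φ) = u⁺(r)Φ⁺(θ,φ) + u⁻(r)Φ⁻`, one has
`⟨u,u⟩·u = v⁺(r)Φ⁺(θ,φ) + v⁻(r)Φ⁻` with
`v^± = (1/(4π))(|u⁺|² + |u⁻|²)u^±`, and
`⟨βu,u⟩·u = w⁺(r)Φ⁺(θ,φ) + w⁻(r)Φ⁻` with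
`w^± = (1/(4π))(|u⁺|² − |u⁻|²)u^±`: the cubic nonlinearities `⟨u,u⟩u` and `⟨βu,u⟩u`
preserve the form `u⁺(r)Φ⁺ + u⁻(r)Φ⁻`. -/
theorem partial_wave_nonlinearity_invariance (uP uM : ℝ → ℂ) :
    ∀ r, 0 < r → ∀ θ φ : ℝ,
      (c4inner (uP r • PhiPlus θ φ + uM r • PhiMinus)
          (uP r • PhiPlus θ φ + uM r • PhiMinus)
        • (uP r • PhiPlus θ φ + uM r • PhiMinus)
        = ((((1 / (4 * Real.pi)) * (‖uP r‖ ^ 2 + ‖uM r‖ ^ 2) : ℝ) : ℂ)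
              * uP r) • PhiPlus θ φ
          + ((((1 / (4 * Real.pi)) * (‖uP r‖ ^ 2 + ‖uM r‖ ^ 2) : ℝ) : ℂ)
              * uM r) • PhiMinus) ∧
      (c4inner (betaC4 (uP r • PhiPlus θ φ + uM r • PhiMinus))
          (uP r • PhiPlus θ φ + uM r • PhiMinus)
        • (uP r • PhiPlus θ φ + uM r • PhiMinus)
        = ((((1 / (4 * Real.pi)) * (‖uP r‖ ^ 2 - ‖uM r‖ ^ 2) : ℝ) : ℂ)
              * uP r) • PhiPlus θ φ
          + ((((1 / (4 * Real.pi)) * (‖uP r‖ ^ 2 - ‖uM r‖ ^ 2) : ℝ) : ℂ)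
              * uM r) • PhiMinus) := by
  intro r _ θ φ
  constructor
  · rw [c4inner_smul_PhiPlus_add_smul_PhiMinus_self, smul_add, smul_smul, smul_smul]
  · rw [c4inner_betaC4_smul_PhiPlus_add_smul_PhiMinus, smul_add, smul_smul, smul_smul]
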